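/- Under the two-grid assumptions, the exact two-grid convergence factor satisfies ‖E_TG‖_A < 1 if and only if N(A^{1/2} M̄ A^{1/2}) ∩ N(Pᵀ(I − AM)A^{1/2}) = N(A), where M̄ = M + Mᵀ − MᵀAM. -/

import Mathlib

open Matrix

/-- Euclidean norm of a vector in `ℝⁿ`. -/
noncomputable def enorm {n : ℕ} (v : Fin n → ℝ) : ℝ := Real.sqrt (v ⬝ᵥ v)

/-- The `A`-seminorm `‖v‖_A = sqrt (vᵀ A v)` of a vector. -/
noncomputable def vnorm {n : ℕ} (A : Matrix (Fin n) (Fin n) ℝ) (v : Fin n → ℝ) : ℝ :=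
  Real.sqrt (v ⬝ᵥ A.mulVec v)

/-- The `A`-seminorm of a matrix: sup over `v ∉ N(A)` of `‖Xv‖_A / ‖v‖_A`. -/
noncomputable def matNorm {n : ℕ} (A X : Matrix (Fin n) (Fin n) ℝ) : ℝ :=
  sSup ((fun v => vnorm A (X.mulVec v) / vnorm A v) '' {v | A.mulVec v ≠ 0})

/-- Penrose conditions: `X` is the Moore–Penrose inverse of `S`. -/
def IsMP {m : ℕ} (S X : Matrix (Fin m) (Fin m) ℝ) : Prop :=
  S * X * S = S ∧ X * S * X = X ∧ (S * X)ᵀ = S * X ∧ (X * S)ᵀ = X * S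

/-- `eigk S k` is the `k`-th smallest eigenvalue (1-indexed, counted with
multiplicity) of a symmetric matrix `S` (junk value otherwise). -/
noncomputable def eigk {m : ℕ} (S : Matrix (Fin m) (Fin m) ℝ) (k : ℕ) : ℝ :=
  if hS : S.IsHermitian then
    if h : k - 1 < m then hS.eigenvalues (Tuple.sort hS.eigenvalues ⟨k - 1, h⟩) else 0
  else 0

/-- The square root of a positive semidefinite matrix (as defined in older Mathlib). -/
noncomputable def Matrix.PosSemidef.sqrt {n : ℕ} {A : Matrix (Fin n) (Fin n) ℝ}
    (hA : A.PosSemidef) : Matrix (Fin n) (Fin n) ℝ :=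
  hA.1.eigenvectorUnitary.1 * diagonal ((↑) ∘ (√·) ∘ hA.1.eigenvalues) *
    (star hA.1.eigenvectorUnitary : Matrix (Fin n) (Fin n) ℝ)

/-!
Write `B = A^{1/2}`. Then `B E_TG = T B` with `T = (I - Π)(I - K)`, `K = B M B`, and
`Π = Dᵀ A_c† D` for `D = Pᵀ B`; the Penrose conditions make `Π` the orthogonal projection onto
the range of `Dᵀ`. So `‖E_TG‖_A` is the Euclidean operator norm of `T` on the range of `B`,
and by compactness this supremum is attained. For every `u`,
  `|T u|² = |u|² - uᵀ S u - |Π (I - K) u|²`,  where `S = K + Kᵀ - Kᵀ K = B M̄ B`,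
and `‖I - M A‖_A ≤ 1` makes `S` positive semidefinite. Hence `|T u| = |u|` exactly when
`S u = 0` and `D (I - K) u = Pᵀ (I - A M) B u = 0`, so `‖E_TG‖_A < 1` iff no nonzero vector of
`range B = N(B)ᗮ` lies in `N(S) ∩ N(Pᵀ (I - A M) B)`, i.e. iff this intersection is
`N(B) = N(A)`.
-/

theorem Submodule.exists_forall_le_of_smul_invariant {E : Type*} [NormedAddCommGroup E]
    [NormedSpace ℝ E] [FiniteDimensional ℝ E] {f : E → ℝ} (hf : ContinuousOn f {0}ᶜ)
    (hsmul : ∀ c : ℝ, 0 < c → ∀ u, f (c • u) = f u) {V : Submodule ℝ E} (hV : V ≠ ⊥) :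
    ∃ u₀ ∈ V, u₀ ≠ 0 ∧ ∀ u ∈ V, u ≠ 0 → f u ≤ f u₀ := by
  have hK : IsCompact ((V : Set E) ∩ Metric.sphere 0 1) :=
    (isCompact_sphere 0 1).inter_left V.closed_of_finiteDimensional
  have hnormalize : ∀ u ∈ V, u ≠ 0 →
      ‖u‖⁻¹ • u ∈ (V : Set E) ∩ Metric.sphere 0 1 ∧ f (‖u‖⁻¹ • u) = f u := fun u hu hu0 =>
    ⟨⟨V.smul_mem _ hu, by simp [norm_smul, hu0]⟩, hsmul _ (by positivity) u⟩
  obtain ⟨u, huV, hu0⟩ := V.exists_mem_ne_zero_of_ne_bot hV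
  obtain ⟨u₀, ⟨hu₀V, hu₀1⟩, hmax⟩ := hK.exists_isMaxOn ⟨_, (hnormalize u huV hu0).1⟩
    (hf.mono fun w hw => ne_zero_of_mem_unit_sphere ⟨w, hw.2⟩)
  refine ⟨u₀, hu₀V, ne_zero_of_mem_unit_sphere ⟨u₀, hu₀1⟩, fun u hu hu0 => ?_⟩
  rw [← (hnormalize u hu hu0).2]
  exact hmax (hnormalize u hu hu0).1

namespace Matrix

variable {n : ℕ}

theorem dotProduct_self_nonneg (u : Fin n → ℝ) : 0 ≤ u ⬝ᵥ u :=
  star_trivial u ▸ dotProduct_star_self_nonneg u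

theorem dotProduct_self_pos {u : Fin n → ℝ} (hu : u ≠ 0) : 0 < u ⬝ᵥ u :=
  star_trivial u ▸ dotProduct_star_self_pos_iff.mpr hu

theorem PosSemidef.transpose_sqrt {A : Matrix (Fin n) (Fin n) ℝ} (hA : A.PosSemidef) :
    hA.sqrtᵀ = hA.sqrt := by
  rw [← conjTranspose_eq_transpose_of_trivial, PosSemidef.sqrt, conjTranspose_mul,
    conjTranspose_mul, diagonal_conjTranspose]
  simp [Matrix.mul_assoc, Matrix.star_eq_conjTranspose]

theorem PosSemidef.sqrt_mul_self {A : Matrix (Fin n) (Fin n) ℝ} (hA : A.PosSemidef) :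
    hA.sqrt * hA.sqrt = A := by
  set U : Matrix (Fin n) (Fin n) ℝ := hA.1.eigenvectorUnitary.1
  set d : Fin n → ℝ := (↑) ∘ (√·) ∘ hA.1.eigenvalues
  have hU : star U * U = 1 := Unitary.star_mul_self_of_mem hA.1.eigenvectorUnitary.2
  have hd : diagonal d * diagonal d = diagonal ((↑) ∘ hA.1.eigenvalues) := by
    rw [diagonal_mul_diagonal]
    congr 1
    funext i
    simp [d, Real.mul_self_sqrt (hA.eigenvalues_nonneg i)]
  calc hA.sqrt * hA.sqrt = U * (diagonal d * (star U * U) * diagonal d) * star U := by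
        simp only [PosSemidef.sqrt, U, d, Matrix.mul_assoc]
    _ = A := by
        rw [hU, Matrix.mul_one, hd]
        conv_rhs => rw [hA.1.spectral_theorem, Unitary.conjStarAlgAut_apply]
        rfl

section Kernel

variable {k m : ℕ}

theorem mul_mulVec_eq_zero_of_mulVec_eq_zero {R : Type*} [CommSemiring R] {p q r : Type*}
    [Fintype q] [Fintype r] (C : Matrix p q R) {B : Matrix q r R} {z : r → R}
    (h : B *ᵥ z = 0) : (C * B) *ᵥ z = 0 := by
  rw [← mulVec_mulVec, h, mulVec_zero]

theorem mulVec_eq_zero_of_mulVec_mulVec_eq_zero {B : Matrix (Fin n) (Fin n) ℝ} (hB : Bᵀ = B)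
    {x : Fin n → ℝ} (h : B *ᵥ (B *ᵥ x) = 0) : B *ᵥ x = 0 := by
  rw [← conjTranspose_mul_self_mulVec_eq_zero, conjTranspose_eq_transpose_of_trivial, hB,
    ← mulVec_mulVec, h]

theorem isCompl_range_ker_of_transpose_eq {B : Matrix (Fin n) (Fin n) ℝ} (hB : Bᵀ = B) :
    IsCompl (LinearMap.range B.mulVecLin) (LinearMap.ker B.mulVecLin) := by
  refine (Submodule.isCompl_iff_disjoint _ _
    (LinearMap.finrank_range_add_finrank_ker _).ge).mpr ?_
  rw [Submodule.disjoint_def]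
  rintro _ ⟨x, rfl⟩ h
  exact mulVec_eq_zero_of_mulVec_mulVec_eq_zero hB h

theorem exists_mulVec_add_of_transpose_eq {B : Matrix (Fin n) (Fin n) ℝ} (hB : Bᵀ = B)
    (v : Fin n → ℝ) : ∃ x z, v = B *ᵥ x + z ∧ B *ᵥ z = 0 := by
  obtain ⟨_, ⟨x, rfl⟩, z, hz, hv⟩ :=
    Submodule.mem_sup.mp
      ((isCompl_range_ker_of_transpose_eq hB).sup_eq_top ▸ Submodule.mem_top (x := v))
  exact ⟨x, z, hv.symm, hz⟩

theorem setOf_mulVec_eq_zero_inter_eq_iff {B : Matrix (Fin n) (Fin n) ℝ} (hB : Bᵀ = B)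
    {S : Matrix (Fin k) (Fin n) ℝ} {Q : Matrix (Fin m) (Fin n) ℝ}
    (hS : ∀ z, B *ᵥ z = 0 → S *ᵥ z = 0) (hQ : ∀ z, B *ᵥ z = 0 → Q *ᵥ z = 0) :
    {v | S *ᵥ v = 0} ∩ {v | Q *ᵥ v = 0} = {v | B *ᵥ v = 0} ↔
      ∀ u ∈ LinearMap.range B.mulVecLin, S *ᵥ u = 0 → Q *ᵥ u = 0 → u = 0 := by
  constructor
  · rintro h _ ⟨x, rfl⟩ hSx hQx
    have : B *ᵥ x ∈ {v | B *ᵥ v = 0} := h ▸ ⟨hSx, hQx⟩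
    exact mulVec_eq_zero_of_mulVec_mulVec_eq_zero hB this
  · intro h
    ext v
    obtain ⟨x, z, rfl, hz⟩ := exists_mulVec_add_of_transpose_eq hB v
    simp only [Set.mem_inter_iff, Set.mem_ofPred_eq, mulVec_add, hS z hz, hQ z hz, hz, add_zero]
    refine ⟨fun ⟨hSx, hQx⟩ => by rw [h (B *ᵥ x) ⟨x, rfl⟩ hSx hQx, mulVec_zero], fun hx => ?_⟩
    rw [mulVec_eq_zero_of_mulVec_mulVec_eq_zero hB hx, mulVec_zero, mulVec_zero]
    exact ⟨rfl, rfl⟩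

theorem posSemidef_of_dotProduct_mulVec_mulVec_nonneg {B S : Matrix (Fin n) (Fin n) ℝ}
    (hB : Bᵀ = B) (hS : Sᵀ = S) (hker : ∀ z, B *ᵥ z = 0 → S *ᵥ z = 0)
    (hnonneg : ∀ x, 0 ≤ (B *ᵥ x) ⬝ᵥ (S *ᵥ (B *ᵥ x))) : S.PosSemidef := by
  refine PosSemidef.of_dotProduct_mulVec_nonneg
    (by rwa [IsHermitian, conjTranspose_eq_transpose_of_trivial]) fun v => ?_
  obtain ⟨x, z, rfl, hz⟩ := exists_mulVec_add_of_transpose_eq hB v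
  have hzS : z ⬝ᵥ (S *ᵥ (B *ᵥ x)) = 0 := by
    rw [dotProduct_mulVec, ← mulVec_transpose, hS, hker z hz, zero_dotProduct]
  rw [mulVec_add, hker z hz, add_zero, star_trivial, add_dotProduct, hzS, add_zero]
  exact hnonneg x

end Kernel

theorem dotProduct_one_sub_mulVec_self (K : Matrix (Fin n) (Fin n) ℝ) (u : Fin n → ℝ) :
    ((1 - K) *ᵥ u) ⬝ᵥ ((1 - K) *ᵥ u) = u ⬝ᵥ u - u ⬝ᵥ ((K + Kᵀ - Kᵀ * K) *ᵥ u) := by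
  have hKt : u ⬝ᵥ (Kᵀ *ᵥ u) = u ⬝ᵥ (K *ᵥ u) := by
    rw [dotProduct_mulVec, vecMul_transpose, dotProduct_comm]
  have hKtK : u ⬝ᵥ ((Kᵀ * K) *ᵥ u) = (K *ᵥ u) ⬝ᵥ (K *ᵥ u) := by
    rw [← mulVec_mulVec, dotProduct_mulVec, vecMul_transpose]
  simp only [sub_mulVec, add_mulVec, one_mulVec, dotProduct_sub, sub_dotProduct, dotProduct_add,
    hKt, hKtK, dotProduct_comm (K *ᵥ u) u]
  ring

section Projection

variable {m : ℕ} {D : Matrix (Fin m) (Fin n) ℝ} {G : Matrix (Fin m) (Fin m) ℝ}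

theorem mul_transpose_mul_mul_eq_of_isMP (hG : IsMP (D * Dᵀ) G) : D * Dᵀ * G * D = D := by
  obtain ⟨hSGS, -, hSG, -⟩ := hG
  set S := D * Dᵀ
  have hE : (D - S * G * D) * (D - S * G * D)ᵀ = (S - S * G * S) * (1 - S * G) := by
    rw [transpose_sub, transpose_mul, transpose_mul, ← transpose_mul, hSG]
    simp only [S, Matrix.sub_mul, Matrix.mul_sub, Matrix.mul_one, Matrix.mul_assoc]
  rw [hSGS, sub_self, Matrix.zero_mul, ← conjTranspose_eq_transpose_of_trivial,
    self_mul_conjTranspose_eq_zero, sub_eq_zero] at hE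
  exact hE.symm

theorem transpose_mul_mul_transpose_eq (hG : D * Dᵀ * G * D = D) :
    (Dᵀ * G * D)ᵀ = Dᵀ * G * D := by
  have hDt : Dᵀ = Dᵀ * Gᵀ * (D * Dᵀ) := by
    have h := congrArg transpose hG
    simp only [transpose_mul, transpose_transpose, Matrix.mul_assoc] at h ⊢
    exact h.symm
  calc (Dᵀ * G * D)ᵀ = Dᵀ * Gᵀ * (D * Dᵀ * G * D) := by
        rw [hG, transpose_mul, transpose_mul, transpose_transpose, Matrix.mul_assoc]
    _ = Dᵀ * G * D := by
        conv_rhs => rw [hDt]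
        simp only [Matrix.mul_assoc]

theorem transpose_mul_mul_mul_self (hG : D * Dᵀ * G * D = D) :
    Dᵀ * G * D * (Dᵀ * G * D) = Dᵀ * G * D :=
  calc Dᵀ * G * D * (Dᵀ * G * D) = Dᵀ * G * (D * Dᵀ * G * D) := by simp only [Matrix.mul_assoc]
    _ = Dᵀ * G * D := by rw [hG]

theorem transpose_mul_mul_mulVec_eq_zero_iff (hG : D * Dᵀ * G * D = D) (z : Fin n → ℝ) :
    (Dᵀ * G * D) *ᵥ z = 0 ↔ D *ᵥ z = 0 := by
  refine ⟨fun h => ?_, fun h => by rw [← mulVec_mulVec, h, mulVec_zero]⟩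
  rw [← hG, show D * Dᵀ * G * D = D * (Dᵀ * G * D) by simp only [Matrix.mul_assoc],
    ← mulVec_mulVec, h, mulVec_zero]

theorem dotProduct_one_sub_transpose_mul_mul_mulVec_self (hG : D * Dᵀ * G * D = D)
    (z : Fin n → ℝ) :
    ((1 - Dᵀ * G * D) *ᵥ z) ⬝ᵥ ((1 - Dᵀ * G * D) *ᵥ z) =
      z ⬝ᵥ z - ((Dᵀ * G * D) *ᵥ z) ⬝ᵥ ((Dᵀ * G * D) *ᵥ z) := by
  set Pr := Dᵀ * G * D
  have hPr : (Pr *ᵥ z) ⬝ᵥ (Pr *ᵥ z) = z ⬝ᵥ (Pr *ᵥ z) := by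
    rw [dotProduct_mulVec, ← mulVec_transpose, transpose_mul_mul_transpose_eq hG, mulVec_mulVec,
      transpose_mul_mul_mul_self hG, dotProduct_comm]
  simp only [sub_mulVec, one_mulVec, dotProduct_sub, sub_dotProduct, hPr,
    dotProduct_comm (Pr *ᵥ z) z]
  ring

theorem dotProduct_two_grid_lt_iff {K : Matrix (Fin n) (Fin n) ℝ} (hG : D * Dᵀ * G * D = D)
    (hK : (K + Kᵀ - Kᵀ * K).PosSemidef) (u : Fin n → ℝ) :
    (((1 - Dᵀ * G * D) * (1 - K)) *ᵥ u) ⬝ᵥ (((1 - Dᵀ * G * D) * (1 - K)) *ᵥ u) < u ⬝ᵥ u ↔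
      ¬((K + Kᵀ - Kᵀ * K) *ᵥ u = 0 ∧ (D * (1 - K)) *ᵥ u = 0) := by
  set w := (Dᵀ * G * D) *ᵥ ((1 - K) *ᵥ u)
  have hsmooth : 0 ≤ u ⬝ᵥ ((K + Kᵀ - Kᵀ * K) *ᵥ u) :=
    star_trivial u ▸ hK.dotProduct_mulVec_nonneg u
  have hw : 0 ≤ w ⬝ᵥ w := dotProduct_self_nonneg w
  have hsmooth_eq : u ⬝ᵥ ((K + Kᵀ - Kᵀ * K) *ᵥ u) = 0 ↔ (K + Kᵀ - Kᵀ * K) *ᵥ u = 0 :=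
    star_trivial u ▸ hK.dotProduct_mulVec_zero_iff u
  rw [← mulVec_mulVec, dotProduct_one_sub_transpose_mul_mul_mulVec_self hG,
    dotProduct_one_sub_mulVec_self,
    sub_sub, sub_lt_self_iff,
    (add_nonneg hsmooth hw).lt_iff_ne', Ne, add_eq_zero_iff_of_nonneg hsmooth hw, hsmooth_eq,
    dotProduct_self_eq_zero, transpose_mul_mul_mulVec_eq_zero_iff hG, mulVec_mulVec]

end Projection

noncomputable def amplification (T : Matrix (Fin n) (Fin n) ℝ) (u : Fin n → ℝ) : ℝ :=
  √((T *ᵥ u) ⬝ᵥ (T *ᵥ u)) / √(u ⬝ᵥ u)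

theorem amplification_smul (T : Matrix (Fin n) (Fin n) ℝ) {c : ℝ} (hc : 0 < c)
    (u : Fin n → ℝ) : amplification T (c • u) = amplification T u := by
  have hsqrt : ∀ w : Fin n → ℝ, √((c • w) ⬝ᵥ (c • w)) = c * √(w ⬝ᵥ w) := fun w => by
    rw [smul_dotProduct, dotProduct_smul, smul_eq_mul, smul_eq_mul, ← mul_assoc,
      Real.sqrt_mul (mul_self_nonneg c), Real.sqrt_mul_self hc.le]
  rw [amplification, amplification, mulVec_smul, hsqrt, hsqrt, mul_div_mul_left _ _ hc.ne']

theorem continuousOn_amplification (T : Matrix (Fin n) (Fin n) ℝ) :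
    ContinuousOn (amplification T) {0}ᶜ :=
  .div (by fun_prop) (by fun_prop) fun _ hu => Real.sqrt_ne_zero'.mpr (dotProduct_self_pos hu)

theorem amplification_le_one_iff (T : Matrix (Fin n) (Fin n) ℝ) {u : Fin n → ℝ} (hu : u ≠ 0) :
    amplification T u ≤ 1 ↔ (T *ᵥ u) ⬝ᵥ (T *ᵥ u) ≤ u ⬝ᵥ u := by
  rw [amplification, div_le_one (Real.sqrt_pos.mpr (dotProduct_self_pos hu)),
    Real.sqrt_le_sqrt_iff (dotProduct_self_pos hu).le]

theorem amplification_lt_one_iff (T : Matrix (Fin n) (Fin n) ℝ) {u : Fin n → ℝ} (hu : u ≠ 0) :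
    amplification T u < 1 ↔ (T *ᵥ u) ⬝ᵥ (T *ᵥ u) < u ⬝ᵥ u := by
  rw [amplification, div_lt_one (Real.sqrt_pos.mpr (dotProduct_self_pos hu)),
    Real.sqrt_lt_sqrt_iff (dotProduct_self_nonneg _)]

section Submodule

variable (T : Matrix (Fin n) (Fin n) ℝ) (V : Submodule ℝ (Fin n → ℝ))

theorem isGreatest_sSup_amplification (hV : V ≠ ⊥) :
    IsGreatest (amplification T '' {u | u ∈ V ∧ u ≠ 0})
      (sSup (amplification T '' {u | u ∈ V ∧ u ≠ 0})) := by
  obtain ⟨u₀, hu₀V, hu₀, hmax⟩ := Submodule.exists_forall_le_of_smul_invariant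
    (continuousOn_amplification T) (fun _ hc => amplification_smul T hc) hV
  have h : IsGreatest (amplification T '' {u | u ∈ V ∧ u ≠ 0}) (amplification T u₀) :=
    ⟨⟨u₀, ⟨hu₀V, hu₀⟩, rfl⟩, by rintro _ ⟨u, ⟨hu, hu0⟩, rfl⟩; exact hmax u hu hu0⟩
  rwa [h.csSup_eq]

theorem sSup_amplification_le_one_iff :
    sSup (amplification T '' {u | u ∈ V ∧ u ≠ 0}) ≤ 1 ↔
      ∀ u ∈ V, (T *ᵥ u) ⬝ᵥ (T *ᵥ u) ≤ u ⬝ᵥ u := by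
  rcases eq_or_ne V ⊥ with rfl | hV
  · simp
  rw [isLUB_le_iff (isGreatest_sSup_amplification T V hV).isLUB, mem_upperBounds,
    Set.forall_mem_image]
  refine forall_congr' fun u => ⟨fun h hu => ?_, fun h ⟨hu, hu0⟩ => ?_⟩
  · rcases eq_or_ne u 0 with rfl | hu0
    · simp
    · exact (amplification_le_one_iff T hu0).mp (h ⟨hu, hu0⟩)
  · exact (amplification_le_one_iff T hu0).mpr (h hu)

theorem sSup_amplification_lt_one_iff :
    sSup (amplification T '' {u | u ∈ V ∧ u ≠ 0}) < 1 ↔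
      ∀ u ∈ V, u ≠ 0 → (T *ᵥ u) ⬝ᵥ (T *ᵥ u) < u ⬝ᵥ u := by
  rcases eq_or_ne V ⊥ with rfl | hV
  · simp
  rw [(isGreatest_sSup_amplification T V hV).lt_iff, Set.forall_mem_image]
  exact forall_congr' fun u =>
    ⟨fun h hu hu0 => (amplification_lt_one_iff T hu0).mp (h ⟨hu, hu0⟩),
      fun h ⟨hu, hu0⟩ => (amplification_lt_one_iff T hu0).mpr (h hu hu0)⟩

end Submodule

section Seminorm

variable {A B X T M : Matrix (Fin n) (Fin n) ℝ}

theorem mulVec_eq_zero_iff_of_mul_self_eq (hB : Bᵀ = B) (hBA : B * B = A) (v : Fin n → ℝ) :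
    A *ᵥ v = 0 ↔ B *ᵥ v = 0 := by
  rw [← hBA, ← mulVec_mulVec]
  exact ⟨mulVec_eq_zero_of_mulVec_mulVec_eq_zero hB, fun h => by rw [h, mulVec_zero]⟩

theorem vnorm_eq_sqrt (hB : Bᵀ = B) (hBA : B * B = A) (v : Fin n → ℝ) :
    vnorm A v = √((B *ᵥ v) ⬝ᵥ (B *ᵥ v)) := by
  rw [vnorm, ← hBA, ← mulVec_mulVec, dotProduct_mulVec, ← mulVec_transpose, hB]

theorem matNorm_eq_sSup_amplification (hB : Bᵀ = B) (hBA : B * B = A) (hX : B * X = T * B) :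
    matNorm A X = sSup (amplification T '' {u | u ∈ LinearMap.range B.mulVecLin ∧ u ≠ 0}) := by
  have hratio : ∀ v, vnorm A (X *ᵥ v) / vnorm A v = amplification T (B *ᵥ v) := fun v => by
    rw [vnorm_eq_sqrt hB hBA, vnorm_eq_sqrt hB hBA, mulVec_mulVec, hX, ← mulVec_mulVec,
      amplification]
  have hdomain :
      {u | u ∈ LinearMap.range B.mulVecLin ∧ u ≠ 0} = (B *ᵥ ·) '' {v | A *ᵥ v ≠ 0} := by
    ext u
    simp only [LinearMap.mem_range, mulVecLin_apply, Set.mem_image, Set.mem_ofPred_eq, ne_eq,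
      mulVec_eq_zero_iff_of_mul_self_eq hB hBA]
    grind
  rw [matNorm, hdomain, Set.image_image]
  simp_rw [hratio]

theorem mul_symmetrized_mul_eq (hB : Bᵀ = B) (hBA : B * B = A) :
    B * (M + Mᵀ - Mᵀ * A * M) * B =
      B * M * B + (B * M * B)ᵀ - (B * M * B)ᵀ * (B * M * B) := by
  simp only [transpose_mul, hB, ← hBA]
  noncomm_ring

theorem mul_one_sub_mul_eq (hBA : B * B = A) : B * (1 - M * A) = (1 - B * M * B) * B := by
  rw [← hBA]
  noncomm_ring

theorem posSemidef_of_matNorm_one_sub_mul_le_one (hB : Bᵀ = B) (hBA : B * B = A)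
    (hM : matNorm A (1 - M * A) ≤ 1) : (B * (M + Mᵀ - Mᵀ * A * M) * B).PosSemidef := by
  rw [matNorm_eq_sSup_amplification hB hBA (mul_one_sub_mul_eq hBA),
    sSup_amplification_le_one_iff] at hM
  refine posSemidef_of_dotProduct_mulVec_mulVec_nonneg hB ?_
    (fun _ => mul_mulVec_eq_zero_of_mulVec_eq_zero _) fun x => ?_
  · rw [mul_symmetrized_mul_eq hB hBA]
    simp only [transpose_sub, transpose_add, transpose_mul, transpose_transpose]
    abel
  · have h := hM (B *ᵥ x) ⟨x, rfl⟩
    rw [dotProduct_one_sub_mulVec_self, ← mul_symmetrized_mul_eq hB hBA] at h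
    linarith

end Seminorm

end Matrix

theorem stmt2_general {n nc : ℕ}
    (A M : Matrix (Fin n) (Fin n) ℝ) (P : Matrix (Fin n) (Fin nc) ℝ)
    (hA : A.PosSemidef)
    (hM : matNorm A (1 - M * A) ≤ 1)
    (Acd : Matrix (Fin nc) (Fin nc) ℝ) (hAcd : IsMP (Pᵀ * A * P) Acd) :
    matNorm A ((1 - P * Acd * Pᵀ * A) * (1 - M * A)) < 1 ↔
      {v : Fin n → ℝ | (hA.sqrt * (M + Mᵀ - Mᵀ * A * M) * hA.sqrt).mulVec v = 0} ∩
          {v : Fin n → ℝ | (Pᵀ * (1 - A * M) * hA.sqrt).mulVec v = 0} =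
        {v : Fin n → ℝ | A.mulVec v = 0} := by
  set B := hA.sqrt
  have hB : Bᵀ = B := hA.transpose_sqrt
  have hBA : B * B = A := hA.sqrt_mul_self
  clear_value B
  set K := B * M * B
  set D := Pᵀ * B
  have hD : D * Dᵀ * Acd * D = D := by
    refine mul_transpose_mul_mul_eq_of_isMP ?_
    rwa [transpose_mul, hB, Matrix.mul_assoc, ← Matrix.mul_assoc B, hBA, ← Matrix.mul_assoc]
  have hE : B * ((1 - P * Acd * Pᵀ * A) * (1 - M * A)) = (1 - Dᵀ * Acd * D) * (1 - K) * B := by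
    simp only [K, D, transpose_mul, transpose_transpose, hB, ← hBA, Matrix.mul_sub,
      Matrix.sub_mul, Matrix.mul_one, Matrix.one_mul, Matrix.mul_assoc]
  have hQ : Pᵀ * (1 - A * M) * B = D * (1 - K) := by
    simp only [K, D, ← hBA, Matrix.mul_sub, Matrix.sub_mul, Matrix.mul_one, Matrix.mul_assoc]
  have hS := posSemidef_of_matNorm_one_sub_mul_le_one hB hBA hM
  have hkerA : {v | A *ᵥ v = 0} = {v | B *ᵥ v = 0} := by
    ext v
    exact mulVec_eq_zero_iff_of_mul_self_eq hB hBA v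
  rw [hkerA, setOf_mulVec_eq_zero_inter_eq_iff hB
    (fun _ => mul_mulVec_eq_zero_of_mulVec_eq_zero _)
    (fun _ => mul_mulVec_eq_zero_of_mulVec_eq_zero _), matNorm_eq_sSup_amplification hB hBA hE,
    sSup_amplification_lt_one_iff, mul_symmetrized_mul_eq hB hBA, hQ]
  rw [mul_symmetrized_mul_eq hB hBA] at hS
  exact forall₂_congr fun u _ => by rw [dotProduct_two_grid_lt_iff hD hS]; tauto

theorem stmt2 {n nc : ℕ} (hn : nc < n)
    (A M : Matrix (Fin n) (Fin n) ℝ) (P : Matrix (Fin n) (Fin nc) ℝ)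
    (hA : A.PosSemidef) (hA0 : A ≠ 0)
    (hM : matNorm A (1 - M * A) ≤ 1)
    (hAc0 : Pᵀ * A * P ≠ 0)
    (Acd : Matrix (Fin nc) (Fin nc) ℝ) (hAcd : IsMP (Pᵀ * A * P) Acd) :
    matNorm A ((1 - P * Acd * Pᵀ * A) * (1 - M * A)) < 1 ↔
      {v : Fin n → ℝ | (hA.sqrt * (M + Mᵀ - Mᵀ * A * M) * hA.sqrt).mulVec v = 0} ∩
          {v : Fin n → ℝ | (Pᵀ * (1 - A * M) * hA.sqrt).mulVec v = 0} =
        {v : Fin n → ℝ | A.mulVec v = 0} :=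
  stmt2_general A M P hA hM Acd hAcd
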